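/- arXiv:1001.4900 — 2 statements merged into one kernel-verified Lean document; each statement's English description precedes it below -/
import Mathlib

section
/- Suppose Ω ⊂ ℝⁿ is a bounded domain, c ≥ 1 and 0 < r < diam(Ω), and suppose that for every z ∈ ∂Ω every pair of points in Ω ∩ B(z,r) can be joined by a c-cigar in Ω. Then Ω is c₁-uniform with c₁ = 40c² diam(Ω)/r. -/
open MeasureTheory Metric Set Topology Filter Function

noncomputable section

/-- Euclidean space `ℝⁿ`. -/
abbrev En (n : ℕ) : Type := EuclideanSpace ℝ (Fin n)

variable {n : ℕ} {F : Type*} [NormedAddCommGroup F] [NormedSpace ℝ F]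

/-- Partial derivative in the `i`-th coordinate direction. -/
def pd (i : Fin n) (f : En n → F) : En n → F :=
  fun x => lineDeriv ℝ f x (EuclideanSpace.single i 1)

/-- Multi-index partial derivative `∂^β`. -/
def mpd (β : Fin n → ℕ) (f : En n → F) : En n → F :=
  (List.finRange n).foldr (fun i g => (pd i)^[β i] g) f

/-- Order `|β|` of a multi-index. -/
def mlen (β : Fin n → ℕ) : ℕ := ∑ i, β i

/-- Mixed kernel partial derivative `∂_x^a ∂_y^b K (x, y)`. -/
def mpdK (a b : Fin n → ℕ) (K : En n → En n → F) (x y : En n) : F :=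
  mpd a (fun x' => mpd b (K x') y) x

/-- The open upper half space `ℝⁿ₊ = {y : y₀ > 0}`. -/
def upperHalf (n : ℕ) : Set (En n) := {y | ∀ i : Fin n, (i : ℕ) = 0 → 0 < y i}

/-- The boundary hyperplane `∂ℝⁿ₊ = {y : y₀ = 0}`. -/
def upperHalfBdry (n : ℕ) : Set (En n) := {y | ∀ i : Fin n, (i : ℕ) = 0 → y i = 0}

/-- `φ ∈ C_0^∞(Ω)`: a smooth compactly supported test function with support in `Ω`. -/
def IsTestFun (Ω : Set (En n)) (φ : En n → F) : Prop :=
  ContDiff ℝ (⊤ : ℕ∞) φ ∧ HasCompactSupport φ ∧ tsupport φ ⊆ Ω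

/-- `g` is the `i`-th weak partial derivative of `f` on `Ω`. -/
def HasWeakPartial (Ω : Set (En n)) (f : En n → ℝ) (i : Fin n) (g : En n → ℝ) : Prop :=
  ∀ φ : En n → ℝ, IsTestFun Ω φ →
    ∫ y in Ω, f y * pd i φ y = -∫ y in Ω, g y * φ y

/-- `f`, together with its weak gradient `g`, can be approximated in the `W^{1,1}(Ω)` norm by
test functions; this encodes `f ∈ W_0^{1,1}(Ω)`. -/
def ApproxW11Zero (Ω : Set (En n)) (f : En n → ℝ) (g : Fin n → En n → ℝ) : Prop :=
  ∃ φ : ℕ → En n → ℝ, (∀ k, IsTestFun Ω (φ k)) ∧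
    Tendsto (fun k => (∫ y in Ω, |f y - φ k y|) + ∑ i, ∫ y in Ω, |g i y - pd i (φ k) y|)
      atTop (nhds 0)

/-- The defining properties of the Green's function `G(x, ·)` at a point `x ∈ Ω`, with weak
gradient `g`: it belongs to `W_0^{1,1}(Ω) ∩ W^{1,2}(Ω \ B(x,r))` and satisfies
`∑ᵢⱼ ∫_Ω aⁱʲ ∂_j G(x,·) ∂_i φ = φ(x)` for all test functions `φ ∈ C_0^∞(Ω)`. -/
def GreenData (Ω : Set (En n)) (a : Fin n → Fin n → En n → ℝ)
    (G : En n → En n → ℝ) (x : En n) (g : Fin n → En n → ℝ) : Prop :=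
  Integrable (G x) (volume.restrict Ω) ∧
  (∀ i, Integrable (g i) (volume.restrict Ω)) ∧
  (∀ i, HasWeakPartial Ω (G x) i (g i)) ∧
  ApproxW11Zero Ω (G x) g ∧
  (∀ r : ℝ, 0 < r → closedBall x r ⊆ Ω →
    MemLp (G x) 2 (volume.restrict (Ω \ ball x r)) ∧
    ∀ i, MemLp (g i) 2 (volume.restrict (Ω \ ball x r))) ∧
  (∀ φ : En n → ℝ, IsTestFun Ω φ →
    ∑ i, ∑ j, ∫ y in Ω, a i j y * g j y * pd i φ y = φ x)

/-- `G ≥ 0` and, for every `x ∈ Ω`, `G(x, ·)` has the defining properties of a Green's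
function for `-L`, `Lu = ∑ᵢⱼ ∂ᵢ(aⁱʲ ∂ⱼ u)`. -/
def IsGreenCandidate (Ω : Set (En n)) (a : Fin n → Fin n → En n → ℝ)
    (G : En n → En n → ℝ) : Prop :=
  (∀ x ∈ Ω, ∀ y ∈ Ω, x ≠ y → 0 ≤ G x y) ∧
  ∀ x ∈ Ω, ∃ g : Fin n → En n → ℝ, GreenData Ω a G x g

/-- `G` is the Green's function for `-L` on `Ω`: it has the defining weak properties, is
symmetric, and satisfies `G(x,y) ≤ C|x-y|^{2-n}`. -/
def IsGreenFunction (Ω : Set (En n)) (a : Fin n → Fin n → En n → ℝ)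
    (G : En n → En n → ℝ) : Prop :=
  IsGreenCandidate Ω a G ∧
  (∀ x ∈ Ω, ∀ y ∈ Ω, G x y = G y x) ∧
  ∃ C : ℝ, 0 < C ∧ ∀ x ∈ Ω, ∀ y ∈ Ω, x ≠ y → G x y ≤ C * dist x y ^ (2 - (n : ℝ))

/-- A bounded domain: a nonempty bounded open connected set. -/
def IsBoundedDomain (Ω : Set (En n)) : Prop :=
  IsOpen Ω ∧ IsConnected Ω ∧ Bornology.IsBounded Ω

/-- The exterior ball condition. -/
def ExteriorBall (Ω : Set (En n)) : Prop :=
  ∀ ξ ∈ frontier Ω, ∃ z : En n, ∃ r : ℝ, 0 < r ∧ ball z r ⊆ Ωᶜ ∧ dist ξ z = r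

/-- Symmetric coefficients `aⁱʲ = aʲⁱ`. -/
def SymmCoeffs (a : Fin n → Fin n → En n → ℝ) : Prop := ∀ i j, a i j = a j i

/-- Strict ellipticity: `λ|ξ|² ≤ ∑ᵢⱼ aⁱʲ(x) ξᵢ ξⱼ` for a.e. `x ∈ Ω`. -/
def StrictlyElliptic (Ω : Set (En n)) (a : Fin n → Fin n → En n → ℝ) (lam : ℝ) : Prop :=
  0 < lam ∧ ∀ᵐ x ∂(volume.restrict Ω), ∀ ξ : Fin n → ℝ,
    lam * ∑ i, ξ i ^ 2 ≤ ∑ i, ∑ j, a i j x * ξ i * ξ j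

/-- `aⁱʲ ∈ L^∞(Ω)`. -/
def BoundedCoeffs (Ω : Set (En n)) (a : Fin n → Fin n → En n → ℝ) : Prop :=
  ∀ i j, MemLp (a i j) ⊤ (volume.restrict Ω)

/-- Dini continuity of the coefficients. -/
def DiniCoeffs (Ω : Set (En n)) (a : Fin n → Fin n → En n → ℝ) : Prop :=
  ∃ ω : ℝ → ℝ, (∀ t, 0 ≤ ω t) ∧ MonotoneOn ω (Set.Ici (0 : ℝ)) ∧
    (∃ Kd : ℝ, 0 < Kd ∧ ∀ t : ℝ, 0 < t → ω (2 * t) ≤ Kd * ω t) ∧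
    IntegrableOn (fun t => ω t / t) (Set.Ioc (0 : ℝ) 1) ∧
    ∀ i j, ∀ x ∈ Ω, ∀ y ∈ Ω, |a i j x - a i j y| ≤ ω (dist x y)

/-- `f ∈ C^{1,α}(s)`: continuously differentiable with `α`-Hölder first derivatives. -/
def MemC1Alpha (f : En n → ℝ) (s : Set (En n)) (α : ℝ) : Prop :=
  ContDiffOn ℝ 1 f s ∧ ∃ C : ℝ, ∀ x ∈ s, ∀ y ∈ s,
    ‖fderivWithin ℝ f s x - fderivWithin ℝ f s y‖ ≤ C * dist x y ^ α

/-- Coefficients of class `C^{1,α}(closure Ω)`. -/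
def C1AlphaCoeffs (Ω : Set (En n)) (a : Fin n → Fin n → En n → ℝ) (α : ℝ) : Prop :=
  ∀ i j, MemC1Alpha (a i j) (closure Ω) α

/-- A map of class `C^{2,α}` on `s` with norm bounded by `Kc`. -/
def MemC2AlphaMap (f : En n → En n) (s : Set (En n)) (α Kc : ℝ) : Prop :=
  ContDiffOn ℝ 2 f s ∧
  (∀ x ∈ s, ‖f x‖ + ‖fderivWithin ℝ f s x‖ + ‖iteratedFDerivWithin ℝ 2 f s x‖ ≤ Kc) ∧
  ∀ x ∈ s, ∀ y ∈ s,
    ‖iteratedFDerivWithin ℝ 2 f s x - iteratedFDerivWithin ℝ 2 f s y‖ ≤ Kc * dist x y ^ α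

/-- A bounded `C^{2,α}` domain with uniform diffeomorphism constant `Kc` and localization
radius `ρ`: near every boundary point the boundary can be straightened into the upper
half space by a `C^{2,α}` diffeomorphism with norms bounded by `Kc`. -/
def IsC2Domain (Ω : Set (En n)) (α Kc ρ : ℝ) : Prop :=
  IsBoundedDomain Ω ∧ 0 < ρ ∧ ρ / Metric.diam Ω < 1 / 4 ∧
  ∀ ybar ∈ frontier Ω, ∃ ψ ψinv : En n → En n,
    (∀ x ∈ closedBall ybar ρ, ψinv (ψ x) = x) ∧
    (∀ y ∈ ψ '' closedBall ybar ρ, ψ (ψinv y) = y) ∧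
    ψ '' (ball ybar ρ ∩ Ω) ⊆ upperHalf n ∧
    ψ '' (ball ybar ρ ∩ frontier Ω) ⊆ upperHalfBdry n ∧
    MemC2AlphaMap ψ (closedBall ybar ρ) α Kc ∧
    MemC2AlphaMap ψinv (ψ '' closedBall ybar ρ) α Kc

/-- `S` is a `c`-cigar joining `x` and `y` in `Ω`. -/
def IsCigar (Ω : Set (En n)) (c : ℝ) (x y : En n) (S : Set (En n)) : Prop :=
  IsCompact S ∧ IsConnected S ∧ S ⊆ Ω ∧ x ∈ S ∧ y ∈ S ∧
  Metric.diam S ≤ c * dist x y ∧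
  ∀ z ∈ S, min (dist z x) (dist z y) ≤ c * infDist z (frontier Ω)

/-- `Ω` is a `c`-uniform domain. -/
def IsUniform (Ω : Set (En n)) (c : ℝ) : Prop :=
  1 ≤ c ∧ ∀ x ∈ Ω, ∀ y ∈ Ω, x ≠ y → ∃ S : Set (En n), IsCigar Ω c x y S

/-- `Ω` is a `c`-coplump domain. -/
def IsCoplump (Ω : Set (En n)) (c : ℝ) : Prop :=
  1 ≤ c ∧ ∀ x ∉ Ω, ∀ r : ℝ, 0 < r → ENNReal.ofReal r < EMetric.diam (Ωᶜ : Set (En n)) →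
    ∃ z ∈ closedBall x r, ball z (r / c) ⊆ Ωᶜ

/-- The smooth kernel class `𝒦_D^{-m}(δ)`. -/
def IsSmoothKernel (D : Set (En n)) (m : ℕ) (δ : ℝ) (K : En n → En n → F) : Prop :=
  ContDiffOn ℝ m (fun p : En n × En n => K p.1 p.2)
    {p : En n × En n | p.1 ∈ D ∧ p.2 ∈ D ∧ p.1 ≠ p.2} ∧
  ∃ C : ℝ, 0 < C ∧
    (∀ a b : Fin n → ℕ, mlen a + mlen b ≤ m → ∀ x ∈ D, ∀ y ∈ D, x ≠ y →
      ‖mpdK a b K x y‖ ≤ C * dist x y ^ ((m : ℝ) - n - mlen a - mlen b)) ∧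
    (∀ a b : Fin n → ℕ, mlen a + mlen b = m → ∀ x ∈ D, ∀ y ∈ D, x ≠ y → ∀ h : En n,
      ‖h‖ ≤ dist x y / 2 →
      (y + h ∈ D →
        ‖mpdK a b K x (y + h) - mpdK a b K x y‖ ≤ C * ‖h‖ ^ δ * dist x y ^ (-(n : ℝ) - δ)) ∧
      (x + h ∈ D →
        ‖mpdK a b K (x + h) y - mpdK a b K x y‖ ≤ C * ‖h‖ ^ δ * dist x y ^ (-(n : ℝ) - δ)))

/-- The `ℓ`-th order difference `Δ_h^ℓ(f, D, y)`. -/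
def finiteDiff (ℓ : ℕ) (h : En n) (f : En n → F) (D : Set (En n)) (y : En n) : F :=
  haveI := Classical.propDecidable (∀ k : ℕ, k ≤ ℓ → y + (k : ℝ) • h ∈ D)
  if ∀ k : ℕ, k ≤ ℓ → y + (k : ℝ) • h ∈ D then
    ∑ k ∈ Finset.range (ℓ + 1), ((-1 : ℝ) ^ (ℓ + k) * (ℓ.choose k)) • f (y + (k : ℝ) • h)
  else 0

/-- The size and semilocal integral estimates of standard kernels, with constant `C`. -/
def StandardKernelBound (Ω : Set (En n)) (m : ℕ) (δ : ℝ) (K : En n → En n → F)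
    (C : ℝ) : Prop :=
  (∀ x ∈ Ω, ∀ y ∈ Ω, x ≠ y → ‖K x y‖ ≤ C * dist x y ^ ((m : ℝ) - n)) ∧
  ∀ x ∈ Ω, ∀ yB : En n, ∀ r : ℝ, 0 < r → closedBall yB r ⊆ Ω →
    C * (2 * r) ≤ dist x yB → ∀ h : En n, ‖h‖ ≤ 2 * r →
      (∫ y in ball yB r, ‖finiteDiff (m + 1) h (fun z => K x z) (ball yB r) y‖) ≤
        C * dist x yB ^ (-(n : ℝ) - δ) *
          (volume (ball yB r)).toReal ^ (1 + ((m : ℝ) + δ) / n)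

/-- The standard kernel class `K_Ω^{-m}(δ)`. -/
def IsStandardKernel (Ω : Set (En n)) (m : ℕ) (δ : ℝ) (K : En n → En n → F) : Prop :=
  ContinuousOn (fun p : En n × En n => K p.1 p.2)
    {p : En n × En n | p.1 ∈ Ω ∧ p.2 ∈ Ω ∧ p.1 ≠ p.2} ∧
  ∃ C : ℝ, 0 < C ∧ StandardKernelBound Ω m δ K C ∧
    StandardKernelBound Ω m δ (fun x y => K y x) C

/-- A Calderón–Zygmund kernel with Hölder exponent `δ` (the estimates for the transposed
kernel are included). -/
def IsCZKernel (δ : ℝ) (K : En n → En n → F) : Prop :=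
  ∃ C : ℝ, 0 < C ∧
    (∀ x y : En n, x ≠ y → ‖K x y‖ ≤ C * dist x y ^ (-(n : ℝ))) ∧
    (∀ x y h : En n, x ≠ y → ‖h‖ ≤ dist x y / 2 →
      ‖K x (y + h) - K x y‖ ≤ C * ‖h‖ ^ δ * dist x y ^ (-(n : ℝ) - δ)) ∧
    (∀ x y h : En n, x ≠ y → ‖h‖ ≤ dist x y / 2 →
      ‖K (x + h) y - K x y‖ ≤ C * ‖h‖ ^ δ * dist x y ^ (-(n : ℝ) - δ))

/-- A Calderón–Zygmund operator: bounded on `L²(ℝⁿ)` and represented, off the diagonal,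
by integration against a Calderón–Zygmund kernel. -/
def IsCZOperator {𝕜 : Type*} [RCLike 𝕜] (δ : ℝ) (T : (En n → 𝕜) → En n → 𝕜) : Prop :=
  (∃ C : ℝ, 0 < C ∧ ∀ f : En n → 𝕜, IsTestFun (univ : Set (En n)) f →
    eLpNorm (T f) 2 volume ≤ ENNReal.ofReal C * eLpNorm f 2 volume) ∧
  ∃ K : En n → En n → 𝕜, IsCZKernel δ K ∧
    ∀ f g : En n → 𝕜, IsTestFun (univ : Set (En n)) f → IsTestFun (univ : Set (En n)) g →
      Disjoint (tsupport f) (tsupport g) →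
      ∫ x, T f x * g x = ∫ x, ∫ y, K x y * f y * g x

/-- The integral operator associated with the kernel `K`. -/
def kernelOp {𝕜 : Type*} [RCLike 𝕜] (K : En n → En n → 𝕜) (f : En n → 𝕜) (x : En n) : 𝕜 :=
  ∫ y, K x y * f y

end

noncomputable section

variable {n : ℕ}

/-- `u ∈ C^{2,α}(s)` locally: twice continuously differentiable on `s`, with locally
`α`-Hölder second derivatives. -/
def MemC2AlphaLoc (u : En n → ℝ) (s : Set (En n)) (α : ℝ) : Prop :=
  ContDiffOn ℝ 2 u s ∧
  ∀ x ∈ s, ∃ r : ℝ, 0 < r ∧ ∃ C : ℝ, ∀ y ∈ s ∩ ball x r, ∀ z ∈ s ∩ ball x r,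
    ‖iteratedFDerivWithin ℝ 2 u s y - iteratedFDerivWithin ℝ 2 u s z‖ ≤ C * dist y z ^ α

/-- `u ∈ C^{2,α}(s)` globally: twice continuously differentiable on `s`, with uniformly
`α`-Hölder second derivatives. -/
def MemC2AlphaFun (u : En n → ℝ) (s : Set (En n)) (α : ℝ) : Prop :=
  ContDiffOn ℝ 2 u s ∧ ∃ C : ℝ, ∀ x ∈ s, ∀ y ∈ s,
    ‖iteratedFDerivWithin ℝ 2 u s x - iteratedFDerivWithin ℝ 2 u s y‖ ≤ C * dist x y ^ α

end

/-! Write `d z` for the distance from `z` to `∂Ω`. Every point `p` of `Ω` is joined by a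
`c`-cigar to a point `q` with `d q ≥ r / (20 c)` and `|p - q| ≤ r / 20`: when `p` is close to
`∂Ω`, a local cigar from `p` to a point at distance `r / 2` from the boundary point nearest to
`p` passes, at distance `r / 20` from `p`, through such a `q`. Two such deep points within
`r / 4` of each other are joined by a continuum on which `d ≥ r / (40 c²)`: a segment if they
are far from `∂Ω`, a local cigar otherwise. By connectedness of `Ω` these links chain together,
so the deep points attached to any `x, y ∈ Ω` are joined at depth `r / (40 c²)`; with the two
cigars at the ends this gives a `c₁`-cigar when `|x - y| ≥ r / 4`. Closer pairs are joined by a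
segment or by a single local cigar. -/

open Bornology

section Geometry

variable {E : Type*} [NormedAddCommGroup E] [NormedSpace ℝ E] {Ω : Set E} {x y z : E}

theorem ball_infDist_frontier_subset (hΩ : IsOpen Ω) (hx : x ∈ Ω) :
    ball x (infDist x (frontier Ω)) ⊆ Ω := by
  rcases (ball x (infDist x (frontier Ω))).eq_empty_or_nonempty with h | h
  · simp [h]
  refine (convex_ball x _).isPreconnected.subset_of_closure_inter_subset hΩ
    ⟨x, mem_ball_self (nonempty_ball.1 h), hx⟩ ?_
  rintro w ⟨hwc, hwb⟩
  by_contra hwΩ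
  exact notMem_of_dist_lt_infDist (mem_ball'.1 hwb) ⟨hwc, by rwa [hΩ.interior_eq]⟩

theorem segment_subset_of_dist_lt_infDist_frontier (hΩ : IsOpen Ω) (hx : x ∈ Ω)
    (h : dist x y < infDist x (frontier Ω)) : segment ℝ x y ⊆ Ω :=
  ((convex_ball x _).segment_subset (mem_ball_self (dist_nonneg.trans_lt h))
    (mem_ball'.2 h)).trans (ball_infDist_frontier_subset hΩ hx)

theorem infDist_sub_dist_le_of_mem_segment {s : Set E} (hz : z ∈ segment ℝ x y) :
    infDist x s - dist x y ≤ infDist z s := by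
  have := dist_add_dist_of_mem_segment hz
  have := infDist_le_infDist_add_dist (x := x) (y := z) (s := s)
  linarith [dist_nonneg (x := z) (y := y)]

theorem isCompact_segment (x y : E) : IsCompact (segment ℝ x y) := by
  rw [← convexHull_pair (𝕜 := ℝ)]
  exact (toFinite _).isCompact_convexHull ℝ

theorem frontier_nonempty_of_diam_pos (hbdd : IsBounded Ω) (hd : 0 < diam Ω) :
    (frontier Ω).Nonempty := by
  have hΩ : Ω.Nontrivial := by
    by_contra h
    exact hd.ne' (diam_subsingleton (not_nontrivial_iff.1 h))
  obtain ⟨a, ha, b, -, hab⟩ := hΩ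
  have : Nontrivial E := ⟨⟨a, b, hab⟩⟩
  exact nonempty_frontier_iff.2 ⟨⟨a, ha⟩, fun h => NormedSpace.unbounded_univ ℝ E (h ▸ hbdd)⟩

theorem exists_mem_frontier_dist_eq_infDist [ProperSpace E] (hbdd : IsBounded Ω)
    (hd : 0 < diam Ω) (x : E) : ∃ ζ ∈ frontier Ω, dist x ζ = infDist x (frontier Ω) := by
  obtain ⟨ζ, hζ, h⟩ := (hbdd.isCompact_closure.of_isClosed_subset isClosed_frontier
    frontier_subset_closure).exists_infDist_eq_dist (frontier_nonempty_of_diam_pos hbdd hd) x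
  exact ⟨ζ, hζ, h.symm⟩

end Geometry

theorem IsPreconnected.exists_mem_dist_eq_of_mem_closure {X : Type*} [PseudoMetricSpace X]
    {Ω : Set X} {ζ : X} {s : ℝ} (hΩ : IsPreconnected Ω) (hζ : ζ ∈ closure Ω) (hs : 0 < s)
    (hsd : 2 * s < diam Ω) : ∃ w ∈ Ω, dist w ζ = s := by
  obtain ⟨a, ha, hζa⟩ := Metric.mem_closure_iff.1 hζ s hs
  obtain ⟨b, hb, hbζ⟩ : ∃ b ∈ Ω, s ≤ dist b ζ := by
    by_contra! h
    refine hsd.not_ge (diam_le_of_forall_dist_le (by positivity) fun u hu v hv => ?_)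
    linarith [dist_triangle_right u v ζ, h u hu, h v hv]
  exact hΩ.intermediate_value ha hb (continuous_id.dist continuous_const).continuousOn
    ⟨by rw [dist_comm]; exact hζa.le, hbζ⟩

def JoinedAtDepth {X : Type*} [PseudoMetricSpace X] (Ω : Set X) (κ : ℝ) (a b : X) : Prop :=
  ∃ L : Set X, IsCompact L ∧ IsConnected L ∧ L ⊆ Ω ∧ a ∈ L ∧ b ∈ L ∧
    ∀ z ∈ L, κ ≤ infDist z (frontier Ω)

namespace JoinedAtDepth

variable {X : Type*} [PseudoMetricSpace X] {Ω : Set X} {κ : ℝ} {a b e : X}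

theorem symm (h : JoinedAtDepth Ω κ a b) : JoinedAtDepth Ω κ b a :=
  let ⟨L, hLc, hLconn, hLΩ, haL, hbL, hLd⟩ := h
  ⟨L, hLc, hLconn, hLΩ, hbL, haL, hLd⟩

theorem trans (hab : JoinedAtDepth Ω κ a b) (hbe : JoinedAtDepth Ω κ b e) :
    JoinedAtDepth Ω κ a e := by
  obtain ⟨L, hLc, hLconn, hLΩ, haL, hbL, hLd⟩ := hab
  obtain ⟨M, hMc, hMconn, hMΩ, hbM, heM, hMd⟩ := hbe
  exact ⟨L ∪ M, hLc.union hMc, hLconn.union ⟨b, hbL, hbM⟩ hMconn, union_subset hLΩ hMΩ,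
    Or.inl haL, Or.inr heM, fun z hz => hz.elim (hLd z) (hMd z)⟩

end JoinedAtDepth

namespace IsCigar

variable {n : ℕ} {Ω : Set (En n)} {c c' t : ℝ} {x y : En n} {S : Set (En n)}

theorem mem_right (h : IsCigar Ω c x y S) : y ∈ Ω :=
  h.2.2.1 h.2.2.2.2.1

theorem mono (h : IsCigar Ω c x y S) (hcc' : c ≤ c') : IsCigar Ω c' x y S := by
  obtain ⟨hSc, hSconn, hSΩ, hxS, hyS, hdiam, hmin⟩ := h
  refine ⟨hSc, hSconn, hSΩ, hxS, hyS, hdiam.trans ?_, fun z hz => (hmin z hz).trans ?_⟩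
  · gcongr
  · gcongr
    exact infDist_nonneg

theorem dist_le_of_dist_le (h : IsCigar Ω c x y S) (hc : 0 ≤ c)
    (hxy : dist x y ≤ c * infDist y (frontier Ω)) :
    ∀ z ∈ S, dist z x ≤ c * (2 + c) * infDist z (frontier Ω) := by
  intro z hz
  have hz0 : 0 ≤ infDist z (frontier Ω) := infDist_nonneg
  rcases min_le_iff.1 (h.2.2.2.2.2.2 z hz) with hzx | hzy
  · nlinarith [mul_nonneg (mul_nonneg hc hc) hz0, mul_nonneg hc hz0]
  · have := infDist_le_infDist_add_dist (x := y) (y := z) (s := frontier Ω)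
    have := dist_triangle z y x
    rw [dist_comm y z, dist_comm y x] at *
    nlinarith

theorem le_infDist (h : IsCigar Ω c x y S) (hx : t ≤ infDist x (frontier Ω))
    (hy : t ≤ infDist y (frontier Ω)) : ∀ z ∈ S, t ≤ (1 + c) * infDist z (frontier Ω) := by
  intro z hz
  have := infDist_le_infDist_add_dist (x := x) (y := z) (s := frontier Ω)
  have := infDist_le_infDist_add_dist (x := y) (y := z) (s := frontier Ω)
  rw [dist_comm x z, dist_comm y z] at *
  rcases min_le_iff.1 (h.2.2.2.2.2.2 z hz) with hzx | hzy <;> linarith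

end IsCigar

section Cigar

variable {n : ℕ} {Ω : Set (En n)} {c : ℝ} {x y : En n}

theorem isCigar_singleton (hx : x ∈ Ω) (hc : 0 ≤ c) : IsCigar Ω c x x {x} := by
  refine ⟨isCompact_singleton, isConnected_singleton, singleton_subset_iff.2 hx, rfl, rfl,
    by simp, fun z hz => ?_⟩
  rw [mem_singleton_iff.1 hz, dist_self, min_self]
  exact mul_nonneg hc infDist_nonneg

theorem isCigar_segment (hΩ : IsOpen Ω) (hx : x ∈ Ω)
    (h : 2 * dist x y < infDist x (frontier Ω)) : IsCigar Ω 1 x y (segment ℝ x y) := by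
  refine ⟨isCompact_segment x y, (convex_segment x y).isConnected ⟨x, left_mem_segment ℝ x y⟩,
    segment_subset_of_dist_lt_infDist_frontier hΩ hx (by linarith [dist_nonneg (x := x) (y := y)]),
    left_mem_segment ℝ x y, right_mem_segment ℝ x y, ?_, fun z hz => ?_⟩
  · rw [one_mul, ← convexHull_pair, convexHull_diam, diam_pair]
  · have := dist_add_dist_of_mem_segment hz
    have := infDist_sub_dist_le_of_mem_segment (s := frontier Ω) hz
    rw [dist_comm x z] at *
    linarith [min_le_left (dist z x) (dist z y), dist_nonneg (x := z) (y := y)]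

end Cigar

theorem exists_isCigar_of_joinedAtDepth {n : ℕ} {Ω : Set (En n)} (hbdd : IsBounded Ω)
    {x y x' y' : En n} {Sx Sy : Set (En n)} {c C κ : ℝ}
    (hSx : IsCigar Ω c x x' Sx) (hSy : IsCigar Ω c y y' Sy) (hc : 0 ≤ c)
    (hxx' : dist x x' ≤ c * infDist x' (frontier Ω))
    (hyy' : dist y y' ≤ c * infDist y' (frontier Ω)) (hL : JoinedAtDepth Ω κ x' y')
    (hcC : c * (2 + c) ≤ C) (hdiam : diam Ω ≤ C * dist x y) (hκ : diam Ω ≤ C * κ) :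
    ∃ S, IsCigar Ω C x y S := by
  have hx := hSx.dist_le_of_dist_le hc hxx'
  have hy := hSy.dist_le_of_dist_le hc hyy'
  obtain ⟨hSxc, hSxconn, hSxΩ, hxSx, hx'Sx, -, -⟩ := hSx
  obtain ⟨hSyc, hSyconn, hSyΩ, hySy, hy'Sy, -, -⟩ := hSy
  obtain ⟨L, hLc, hLconn, hLΩ, hx'L, hy'L, hLd⟩ := hL
  have hSΩ : Sx ∪ L ∪ Sy ⊆ Ω := union_subset (union_subset hSxΩ hLΩ) hSyΩ
  have hC : 0 ≤ C := (by positivity : 0 ≤ c * (2 + c)).trans hcC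
  refine ⟨Sx ∪ L ∪ Sy, (hSxc.union hLc).union hSyc,
    (hSxconn.union ⟨x', hx'Sx, hx'L⟩ hLconn).union ⟨y', Or.inr hy'L, hy'Sy⟩ hSyconn, hSΩ,
    Or.inl (Or.inl hxSx), Or.inr hySy, (diam_mono hSΩ hbdd).trans hdiam, ?_⟩
  have hd0 : ∀ z, 0 ≤ infDist z (frontier Ω) := fun z => infDist_nonneg
  rintro z ((hz | hz) | hz)
  · exact (min_le_left _ _).trans ((hx z hz).trans (by gcongr; exact hd0 z))
  · calc min (dist z x) (dist z y) ≤ dist z x := min_le_left _ _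
      _ ≤ diam Ω := dist_le_diam_of_mem hbdd (hLΩ hz) (hSxΩ hxSx)
      _ ≤ C * κ := hκ
      _ ≤ C * infDist z (frontier Ω) := by gcongr; exact hLd z hz
  · exact (min_le_right _ _).trans ((hy z hz).trans (by gcongr; exact hd0 z))

def LocallyJoinableByCigars {n : ℕ} (Ω : Set (En n)) (c r : ℝ) : Prop :=
  ∀ z ∈ frontier Ω, ∀ x ∈ Ω ∩ ball z r, ∀ y ∈ Ω ∩ ball z r, x ≠ y →
    ∃ S : Set (En n), IsCigar Ω c x y S

namespace LocallyJoinableByCigars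

variable {n : ℕ} {Ω : Set (En n)} {c r : ℝ}

theorem exists_isCigar_deep (hloc : LocallyJoinableByCigars Ω c r) (hconn : IsPreconnected Ω)
    (hbdd : IsBounded Ω) (hc : 1 ≤ c) (hr : 0 < r) (hrd : r < diam Ω) {p : En n} (hp : p ∈ Ω) :
    ∃ q S, IsCigar Ω c p q S ∧ r / (20 * c) ≤ infDist q (frontier Ω) ∧ dist p q ≤ r / 20 := by
  have hc0 : 0 < c := by linarith
  by_cases hdeep : r / (20 * c) ≤ infDist p (frontier Ω)
  · exact ⟨p, {p}, isCigar_singleton hp hc0.le, hdeep, by rw [dist_self]; positivity⟩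
  have hT : r / (20 * c) ≤ r / 20 := div_le_div_of_nonneg_left hr.le (by norm_num) (by linarith)
  obtain ⟨ζ, hζ, hpζ⟩ := exists_mem_frontier_dist_eq_infDist hbdd (hr.trans hrd) p
  obtain ⟨w, hw, hwζ⟩ := hconn.exists_mem_dist_eq_of_mem_closure (frontier_subset_closure hζ)
    (half_pos hr) (by linarith)
  have hpw : 9 * r / 20 ≤ dist w p := by linarith [dist_triangle w p ζ]
  have hpr : p ∈ Ω ∩ ball ζ r := ⟨hp, by rw [mem_ball, hpζ]; linarith⟩
  obtain ⟨E, -, hEconn, hEΩ, hpE, hwE, -, hEmin⟩ :=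
    hloc ζ hζ p hpr w ⟨hw, by rw [mem_ball, hwζ]; linarith⟩
      (by rintro rfl; rw [dist_self] at hpw; linarith)
  obtain ⟨q, hqE, hqp⟩ : ∃ q ∈ E, dist q p = r / 20 :=
    hEconn.isPreconnected.intermediate_value hpE hwE
    (continuous_id.dist continuous_const).continuousOn
    (⟨by rw [dist_self]; positivity, by linarith⟩ : r / 20 ∈ Icc (dist p p) (dist w p))
  have hqw : r / 20 ≤ dist q w := by linarith [dist_triangle_left w p q]
  have hqd : r / (20 * c) ≤ infDist q (frontier Ω) := by
    have := hEmin q hqE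
    rw [hqp, min_eq_left hqw] at this
    rw [div_le_iff₀ (by positivity)]
    linarith
  obtain ⟨S, hS⟩ := hloc ζ hζ p hpr q ⟨hEΩ hqE, by
      rw [mem_ball]; linarith [dist_triangle q p ζ]⟩
    (by rintro rfl; rw [dist_self] at hqp; linarith)
  exact ⟨q, S, hS, hqd, by rw [dist_comm, hqp]⟩

theorem joinedAtDepth_of_dist_le (hloc : LocallyJoinableByCigars Ω c r) (hΩ : IsOpen Ω) (hbdd : IsBounded Ω)
    (hc : 1 ≤ c) (hr : 0 < r) (hrd : r < diam Ω) {a b : En n} (ha : a ∈ Ω) (hb : b ∈ Ω)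
    (had : r / (20 * c) ≤ infDist a (frontier Ω)) (hbd : r / (20 * c) ≤ infDist b (frontier Ω))
    (hab : dist a b ≤ r / 4) : JoinedAtDepth Ω (r / (40 * c ^ 2)) a b := by
  have hc0 : 0 < c := by linarith
  have hκ : (1 + c) * (r / (40 * c ^ 2)) ≤ r / (20 * c) := by
    rw [← mul_div_assoc, div_le_div_iff₀ (by positivity) (by positivity)]
    nlinarith [mul_pos (mul_pos hr hc0) hc0]
  have hκ0 : 0 < r / (40 * c ^ 2) := by positivity
  have hκr : r / (40 * c ^ 2) ≤ r / 40 :=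
    div_le_div_of_nonneg_left hr.le (by norm_num) (by nlinarith)
  by_cases hseg : r / (40 * c ^ 2) + dist a b ≤ infDist a (frontier Ω)
  · refine ⟨segment ℝ a b, isCompact_segment a b,
      (convex_segment a b).isConnected ⟨a, left_mem_segment ℝ a b⟩,
      segment_subset_of_dist_lt_infDist_frontier hΩ ha (by linarith),
      left_mem_segment ℝ a b, right_mem_segment ℝ a b, fun z hz => ?_⟩
    linarith [infDist_sub_dist_le_of_mem_segment (s := frontier Ω) hz]
  obtain ⟨ζ, hζ, haζ⟩ := exists_mem_frontier_dist_eq_infDist hbdd (hr.trans hrd) a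
  obtain ⟨S, hS⟩ := hloc ζ hζ a ⟨ha, by rw [mem_ball, haζ]; linarith⟩ b
    ⟨hb, by rw [mem_ball]; linarith [dist_triangle_left b ζ a]⟩
    (by rintro rfl; rw [dist_self] at hseg; nlinarith)
  have hSd := hS.le_infDist had hbd
  obtain ⟨hSc, hSconn, hSΩ, haS, hbS, -, -⟩ := hS
  exact ⟨S, hSc, hSconn, hSΩ, haS, hbS, fun z hz =>
    le_of_mul_le_mul_left (hκ.trans (hSd z hz)) (by linarith)⟩

theorem joinedAtDepth (hloc : LocallyJoinableByCigars Ω c r) (hΩ : IsOpen Ω)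
    (hconn : IsPreconnected Ω) (hbdd : IsBounded Ω) (hc : 1 ≤ c) (hr : 0 < r) (hrd : r < diam Ω)
    {a b : En n} (ha : a ∈ Ω) (hb : b ∈ Ω) (had : r / (20 * c) ≤ infDist a (frontier Ω))
    (hbd : r / (20 * c) ≤ infDist b (frontier Ω)) : JoinedAtDepth Ω (r / (40 * c ^ 2)) a b := by
  let P : En n → En n → Prop := fun x y => ∀ a ∈ Ω, ∀ b ∈ Ω,
    r / (20 * c) ≤ infDist a (frontier Ω) → r / (20 * c) ≤ infDist b (frontier Ω) →
    dist x a ≤ r / 20 → dist y b ≤ r / 20 → JoinedAtDepth Ω (r / (40 * c ^ 2)) a b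
  have hr0 : ∀ p : En n, dist p p ≤ r / 20 := fun p => by rw [dist_self]; positivity
  refine hconn.induction₂ P ?_ ?_ ?_ ha hb a ha b hb had hbd (hr0 a) (hr0 b)
  · intro x _
    filter_upwards [mem_nhdsWithin_of_mem_nhds (ball_mem_nhds x (by positivity : 0 < r / 10))]
      with y hy a ha b hb had hbd hxa hyb
    refine hloc.joinedAtDepth_of_dist_le hΩ hbdd hc hr hrd ha hb had hbd ?_
    linarith [dist_triangle4 a x y b, dist_comm a x, mem_ball'.1 hy]
  · intro x y z _ hy _ hxy hyz a ha e he had hed hxa hze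
    obtain ⟨q, S, hS, hqd, hyq⟩ := hloc.exists_isCigar_deep hconn hbdd hc hr hrd hy
    exact (hxy a ha q hS.mem_right had hqd hxa hyq).trans
      (hyz q hS.mem_right e he hqd hed hyq hze)
  · intro x y _ _ hxy a ha b hb had hbd hya hxb
    exact (hxy b hb a ha hbd had hxb hya).symm

end LocallyJoinableByCigars

/-- Väisälä, [Väi88, Theorem 4.1]. Suppose `Ω ⊂ ℝⁿ` is a bounded domain,
`c ≥ 1` and `0 < r < diam Ω`, and suppose that for every `z ∈ ∂Ω` every pair of distinct
points of `Ω ∩ B(z,r)` can be joined by a `c`-cigar in `Ω`. Then `Ω` is `c₁`-uniform with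
`c₁ = 40 c² diam(Ω) / r`. -/
theorem statement6 {n : ℕ} (Ω : Set (En n)) (hΩ : IsBoundedDomain Ω)
    (c r : ℝ) (hc : 1 ≤ c) (hr : 0 < r) (hrd : r < Metric.diam Ω)
    (hloc : ∀ z ∈ frontier Ω, ∀ x ∈ Ω ∩ Metric.ball z r, ∀ y ∈ Ω ∩ Metric.ball z r,
      x ≠ y → ∃ S : Set (En n), IsCigar Ω c x y S) :
    IsUniform Ω (40 * c ^ 2 * Metric.diam Ω / r) := by
  obtain ⟨hΩ, ⟨-, hconn⟩, hbdd⟩ := hΩ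
  replace hloc : LocallyJoinableByCigars Ω c r := hloc
  have hd : 0 < diam Ω := hr.trans hrd
  set C := 40 * c ^ 2 * diam Ω / r with hC
  have hcC : 40 * c ^ 2 ≤ C := by rw [hC, le_div_iff₀ hr]; nlinarith
  refine ⟨by nlinarith, fun x hx y hy hxy => ?_⟩
  rcases lt_or_ge (dist x y) (r / 4) with hnear | hfar
  · rcases lt_or_ge (2 * dist x y) (infDist x (frontier Ω)) with hdeep | hshallow
    · exact ⟨_, (isCigar_segment hΩ hx hdeep).mono (by nlinarith)⟩
    obtain ⟨ζ, hζ, hxζ⟩ := exists_mem_frontier_dist_eq_infDist hbdd hd x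
    obtain ⟨S, hS⟩ := hloc ζ hζ x ⟨hx, by rw [mem_ball, hxζ]; linarith⟩ y
      ⟨hy, by rw [mem_ball]; linarith [dist_triangle_left y ζ x]⟩ hxy
    exact ⟨S, hS.mono (by nlinarith)⟩
  obtain ⟨x', Sx, hSx, hx'd, hxx'⟩ := hloc.exists_isCigar_deep hconn hbdd hc hr hrd hx
  obtain ⟨y', Sy, hSy, hy'd, hyy'⟩ := hloc.exists_isCigar_deep hconn hbdd hc hr hrd hy
  have hT : r / 20 = c * (r / (20 * c)) := by field_simp
  refine exists_isCigar_of_joinedAtDepth hbdd hSx hSy (by positivity)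
    (hxx'.trans (by rw [hT]; gcongr)) (hyy'.trans (by rw [hT]; gcongr))
    (hloc.joinedAtDepth hΩ hconn hbdd hc hr hrd hSx.mem_right hSy.mem_right hx'd hy'd)
    (by nlinarith) ?_ ?_
  · calc diam Ω ≤ 10 * c ^ 2 * diam Ω := by nlinarith [one_le_pow₀ (n := 2) hc]
      _ = C * (r / 4) := by rw [hC]; field_simp; ring
      _ ≤ C * dist x y := by gcongr
  · exact (show C * (r / (40 * c ^ 2)) = diam Ω by rw [hC]; field_simp).ge
end

section
/- Let Ω ⊂ ℝⁿ, n ≥ 2, be a bounded C^{2,α} domain with uniform diffeomorphism constant K and localization radius ρ > 0. Then Ω is c-coplump with c = 8K⁴ diam(Ω)/ρ. -/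
open MeasureTheory Metric Set Topology Filter Function

/-!
Near a boundary point `ȳ` the chart `ψ` maps `Ω` into `{y₀ > 0}` and `ȳ` to `{y₀ = 0}`, and
Taylor's formula with `‖D²ψ‖ ≤ K` gives `ψ₀ v ≤ ⟪g, v - ȳ⟫ + K ‖v - ȳ‖²`, where `g = ∇ψ₀(ȳ)`
satisfies `‖g‖ ≥ 1/K` because `Dψ⁻¹` is bounded by `K`. Hence for `R ≤ min (ρ/2) (1/(2K²))` the
ball `B(ȳ - R g/‖g‖, R)` misses `Ω`. Given `x ∉ Ω` and a scale `r`, set `R = r/c`: either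
`B(x, R)` misses `Ω`; or `r ≥ 2 diam Ω` and any point at distance `r` from `x` is the centre of a
ball of radius `R` missing `Ω`; or some boundary point `ȳ` lies within `R` of `x`, and `R` is
small enough for the chart at `ȳ` because the chart bounds force `K ≥ 1` and `ρ ≤ 2K`.
-/

open scoped RealInnerProductSpace

section Calculus

variable {E F : Type*} [NormedAddCommGroup E] [NormedSpace ℝ E]
  [NormedAddCommGroup F] [NormedSpace ℝ F]

theorem Convex.norm_image_sub_sub_fderiv_le_mul_sq {f : E → F} {f' : E → E →L[ℝ] F}
    {s : Set E} {C : ℝ} {y v : E} (hs : Convex ℝ s)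
    (hf : ∀ u ∈ s, HasFDerivWithinAt f (f' u) s u)
    (hf' : ∀ u ∈ s, ‖f' u - f' y‖ ≤ C * ‖u - y‖) (hC : 0 ≤ C) (hy : y ∈ s) (hv : v ∈ s) :
    ‖f v - f y - f' y (v - y)‖ ≤ C * ‖v - y‖ ^ 2 := by
  set t := ‖v - y‖
  have hsub : s ∩ closedBall y t ⊆ s := inter_subset_left
  have hbound : ∀ u ∈ s ∩ closedBall y t, ‖f' u - f' y‖ ≤ C * t := fun u hu =>
    (hf' u hu.1).trans <| mul_le_mul_of_nonneg_left (mem_closedBall_iff_norm.1 hu.2) hC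
  calc ‖f v - f y - f' y (v - y)‖ ≤ C * t * ‖v - y‖ :=
        (hs.inter (convex_closedBall y t)).norm_image_sub_le_of_norm_hasFDerivWithin_le'
          (fun u hu => (hf u hu.1).mono hsub) hbound ⟨hy, mem_closedBall_self (norm_nonneg _)⟩
          ⟨hv, mem_closedBall_iff_norm.2 le_rfl⟩
    _ = C * t ^ 2 := by ring

theorem fderivWithin_comp_fderivWithin_eq_id {f : E → F} {g : F → E} {s : Set E} {y : E}
    (hs : UniqueDiffWithinAt ℝ s y) (hy : y ∈ s) (hgf : ∀ x ∈ s, g (f x) = x)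
    (hf : DifferentiableWithinAt ℝ f s y) (hg : DifferentiableWithinAt ℝ g (f '' s) (f y)) :
    (fderivWithin ℝ g (f '' s) (f y)).comp (fderivWithin ℝ f s y) =
      ContinuousLinearMap.id ℝ E :=
  hs.eq (hg.hasFDerivWithinAt.comp y hf.hasFDerivWithinAt (mapsTo_image f s)) <|
    (hasFDerivWithinAt_id y s).congr (fun x hx => hgf x hx) (hgf y hy)

theorem one_le_of_comp_eq_id [Nontrivial E] {A B : E →L[ℝ] E} {K : ℝ}
    (hAB : A.comp B = ContinuousLinearMap.id ℝ E) (hA : ‖A‖ ≤ K) (hB : ‖B‖ ≤ K) : 1 ≤ K := by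
  have h := A.opNorm_comp_le B
  rw [hAB, ContinuousLinearMap.norm_id] at h
  nlinarith [norm_nonneg A, norm_nonneg B]

theorem uniqueDiffOn_closedBall_of_pos {y : E} {ρ : ℝ} (hρ : 0 < ρ) :
    UniqueDiffOn ℝ (closedBall y ρ) :=
  uniqueDiffOn_convex (convex_closedBall y ρ) <| by
    rw [interior_closedBall y hρ.ne']
    exact ⟨y, mem_ball_self hρ⟩

end Calculus

section LinearAlgebra

variable {E : Type*} [NormedAddCommGroup E] [InnerProductSpace ℝ E] [FiniteDimensional ℝ E]

theorem norm_le_mul_norm_adjoint_of_comp_eq_id {A B : E →L[ℝ] E}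
    (hAB : A.comp B = ContinuousLinearMap.id ℝ E) (v : E) :
    ‖v‖ ≤ ‖A‖ * ‖ContinuousLinearMap.adjoint B v‖ := by
  have hBA : ∀ u, B (A u) = u := by
    have h : (A : E →ₗ[ℝ] E) ∘ₗ (B : E →ₗ[ℝ] E) = LinearMap.id := by
      ext u; exact congrArg (· u) hAB
    exact fun u => LinearMap.congr_fun ((LinearMap.comp_eq_id_comm ℝ E).1 h) u
  have hsq : ‖v‖ * ‖v‖ ≤ ‖A‖ * ‖ContinuousLinearMap.adjoint B v‖ * ‖v‖ :=
    calc ‖v‖ * ‖v‖ = ⟪ContinuousLinearMap.adjoint B v, A v⟫ := by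
          rw [ContinuousLinearMap.adjoint_inner_left, hBA, real_inner_self_eq_norm_mul_norm]
      _ ≤ ‖ContinuousLinearMap.adjoint B v‖ * (‖A‖ * ‖v‖) :=
          (real_inner_le_norm _ _).trans <|
            mul_le_mul_of_nonneg_left (A.le_opNorm v) (norm_nonneg _)
      _ = ‖A‖ * ‖ContinuousLinearMap.adjoint B v‖ * ‖v‖ := by ring
  rcases (norm_nonneg v).eq_or_lt with hv | hv
  · rw [← hv]; positivity
  · exact le_of_mul_le_mul_right hsq hv

end LinearAlgebra

namespace MemC2AlphaMap

variable {n : ℕ} {f : En n → En n} {s : Set (En n)} {α K : ℝ} {x : En n}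

theorem norm_le (hf : MemC2AlphaMap f s α K) (hx : x ∈ s) : ‖f x‖ ≤ K := by
  have := hf.2.1 x hx
  linarith [norm_nonneg (fderivWithin ℝ f s x), norm_nonneg (iteratedFDerivWithin ℝ 2 f s x)]

theorem norm_fderivWithin_le (hf : MemC2AlphaMap f s α K) (hx : x ∈ s) :
    ‖fderivWithin ℝ f s x‖ ≤ K := by
  have := hf.2.1 x hx
  linarith [norm_nonneg (f x), norm_nonneg (iteratedFDerivWithin ℝ 2 f s x)]

theorem norm_iteratedFDerivWithin_two_le (hf : MemC2AlphaMap f s α K) (hx : x ∈ s) :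
    ‖iteratedFDerivWithin ℝ 2 f s x‖ ≤ K := by
  have := hf.2.1 x hx
  linarith [norm_nonneg (f x), norm_nonneg (fderivWithin ℝ f s x)]

theorem nonneg (hf : MemC2AlphaMap f s α K) (hx : x ∈ s) : 0 ≤ K :=
  (norm_nonneg _).trans (hf.norm_le hx)

theorem differentiableOn (hf : MemC2AlphaMap f s α K) : DifferentiableOn ℝ f s :=
  hf.1.differentiableOn (by norm_num)

theorem norm_fderivWithin_sub_le (hf : MemC2AlphaMap f s α K) (hs : Convex ℝ s)
    (hs' : UniqueDiffOn ℝ s) {u v : En n} (hu : u ∈ s) (hv : v ∈ s) :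
    ‖fderivWithin ℝ f s u - fderivWithin ℝ f s v‖ ≤ K * ‖u - v‖ := by
  have hD : DifferentiableOn ℝ (fderivWithin ℝ f s) s :=
    (hf.1.fderivWithin hs' (by norm_num : (1 : WithTop ℕ∞) + 1 ≤ 2)).differentiableOn
      (by norm_num)
  refine hs.norm_image_sub_le_of_norm_fderivWithin_le hD (fun w hw => ?_) hv hu
  rw [← norm_iteratedFDerivWithin_one _ (hs' w hw), norm_iteratedFDerivWithin_fderivWithin hs' hw]
  exact hf.norm_iteratedFDerivWithin_two_le hw

theorem norm_sub_sub_fderivWithin_le (hf : MemC2AlphaMap f s α K) (hs : Convex ℝ s)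
    (hs' : UniqueDiffOn ℝ s) {y v : En n} (hy : y ∈ s) (hv : v ∈ s) :
    ‖f v - f y - fderivWithin ℝ f s y (v - y)‖ ≤ K * ‖v - y‖ ^ 2 :=
  hs.norm_image_sub_sub_fderiv_le_mul_sq
    (fun u hu => (hf.differentiableOn u hu).hasFDerivWithinAt)
    (fun _ hu => hf.norm_fderivWithin_sub_le hs hs' hu hy) (hf.nonneg hy) hy hv

theorem apply_le_inner_add (hf : MemC2AlphaMap f s α K) (hs : Convex ℝ s)
    (hs' : UniqueDiffOn ℝ s) {y v : En n} (hy : y ∈ s) (hv : v ∈ s) (i : Fin n) :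
    f v i ≤ f y i +
      ⟪ContinuousLinearMap.adjoint (fderivWithin ℝ f s y) (EuclideanSpace.single i 1), v - y⟫ +
        K * ‖v - y‖ ^ 2 := by
  rw [ContinuousLinearMap.adjoint_inner_left, EuclideanSpace.inner_single_left]
  have h := (PiLp.norm_apply_le (f v - f y - fderivWithin ℝ f s y (v - y)) i).trans
    (hf.norm_sub_sub_fderivWithin_le hs hs' hy hv)
  simp only [PiLp.sub_apply, Real.norm_eq_abs, map_one, one_mul] at h ⊢
  linarith [le_abs_self (f v i - f y i - fderivWithin ℝ f s y (v - y) i)]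

end MemC2AlphaMap

section Geometry

theorem le_two_mul_of_closedBall_subset_closedBall_zero {E : Type*} [NormedAddCommGroup E]
    [NormedSpace ℝ E] [Nontrivial E] {y : E} {ρ K : ℝ} (hρ : 0 ≤ ρ)
    (h : closedBall y ρ ⊆ closedBall 0 K) : ρ ≤ 2 * K := by
  obtain ⟨u, hu⟩ := exists_norm_eq E hρ
  have hyu : ‖y + u‖ ≤ K := mem_closedBall_zero_iff.1 <| h <| by
    rw [mem_closedBall_iff_norm, add_sub_cancel_left, hu]
  have hy : ‖y‖ ≤ K := mem_closedBall_zero_iff.1 <| h <| mem_closedBall_self hρ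
  calc ρ = ‖(y + u) - y‖ := by rw [add_sub_cancel_left, hu]
    _ ≤ ‖y + u‖ + ‖y‖ := norm_sub_le _ _
    _ ≤ 2 * K := by linarith

variable {E : Type*} [NormedAddCommGroup E] [InnerProductSpace ℝ E]

theorem inner_add_mul_norm_sq_neg_of_mem_ball {g y v : E} {K R : ℝ} (hR : 0 < R) (hg : g ≠ 0)
    (hgK : 2 * K * R ≤ ‖g‖) (hv : v ∈ ball (y - (R / ‖g‖) • g) R) :
    ⟪g, v - y⟫ + K * ‖v - y‖ ^ 2 < 0 := by
  have hg' : 0 < ‖g‖ := norm_pos_iff.2 hg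
  have hsq : ‖(v - y) + (R / ‖g‖) • g‖ ^ 2 < R ^ 2 := by
    rw [show v - y + (R / ‖g‖) • g = v - (y - (R / ‖g‖) • g) by abel, ← dist_eq_norm]
    exact pow_lt_pow_left₀ (mem_ball.1 hv) dist_nonneg two_ne_zero
  rw [norm_add_sq_real, inner_smul_right, norm_smul, Real.norm_of_nonneg (by positivity),
    div_mul_cancel₀ _ hg'.ne', real_inner_comm] at hsq
  have hlin : ‖g‖ * ‖v - y‖ ^ 2 + 2 * R * ⟪g, v - y⟫ < 0 := by
    have := mul_lt_mul_of_pos_left (show ‖v - y‖ ^ 2 + 2 * (R / ‖g‖ * ⟪g, v - y⟫) < 0 by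
      linarith) hg'
    field_simp at this
    linarith
  nlinarith [sq_nonneg ‖v - y‖]

end Geometry

section BoundaryChart

variable {n : ℕ} {Ω : Set (En n)} {α K ρ : ℝ} {ybar : En n} {ψ ψinv : En n → En n}

theorem chart_fderivWithin_comp_eq_id (hρ : 0 < ρ)
    (hinv : ∀ x ∈ closedBall ybar ρ, ψinv (ψ x) = x)
    (hψ : MemC2AlphaMap ψ (closedBall ybar ρ) α K)
    (hψinv : MemC2AlphaMap ψinv (ψ '' closedBall ybar ρ) α K) :
    (fderivWithin ℝ ψinv (ψ '' closedBall ybar ρ) (ψ ybar)).comp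
      (fderivWithin ℝ ψ (closedBall ybar ρ) ybar) = ContinuousLinearMap.id ℝ (En n) :=
  have hy := mem_closedBall_self (x := ybar) hρ.le
  fderivWithin_comp_fderivWithin_eq_id (uniqueDiffOn_closedBall_of_pos hρ ybar hy) hy hinv
    (hψ.differentiableOn ybar hy) (hψinv.differentiableOn (ψ ybar) (mem_image_of_mem ψ hy))

theorem one_le_of_chart [NeZero n] (hρ : 0 < ρ) (hinv : ∀ x ∈ closedBall ybar ρ, ψinv (ψ x) = x)
    (hψ : MemC2AlphaMap ψ (closedBall ybar ρ) α K)
    (hψinv : MemC2AlphaMap ψinv (ψ '' closedBall ybar ρ) α K) : 1 ≤ K :=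
  have hy := mem_closedBall_self (x := ybar) hρ.le
  one_le_of_comp_eq_id (chart_fderivWithin_comp_eq_id hρ hinv hψ hψinv)
    (hψinv.norm_fderivWithin_le (mem_image_of_mem ψ hy)) (hψ.norm_fderivWithin_le hy)

theorem le_two_mul_of_chart [NeZero n] (hρ : 0 ≤ ρ)
    (hinv : ∀ x ∈ closedBall ybar ρ, ψinv (ψ x) = x)
    (hψinv : MemC2AlphaMap ψinv (ψ '' closedBall ybar ρ) α K) : ρ ≤ 2 * K :=
  le_two_mul_of_closedBall_subset_closedBall_zero hρ fun x hx =>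
    mem_closedBall_zero_iff.2 <| hinv x hx ▸ hψinv.norm_le (mem_image_of_mem ψ hx)

theorem exists_ball_subset_compl_of_chart [NeZero n] {R : ℝ} (hyb : ybar ∈ frontier Ω)
    (hinv : ∀ x ∈ closedBall ybar ρ, ψinv (ψ x) = x)
    (hup : ψ '' (ball ybar ρ ∩ Ω) ⊆ upperHalf n)
    (hbd : ψ '' (ball ybar ρ ∩ frontier Ω) ⊆ upperHalfBdry n)
    (hψ : MemC2AlphaMap ψ (closedBall ybar ρ) α K)
    (hψinv : MemC2AlphaMap ψinv (ψ '' closedBall ybar ρ) α K)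
    (hR : 0 < R) (hRρ : 2 * R ≤ ρ) (hRK : 2 * K ^ 2 * R ≤ 1) :
    ∃ z, dist z ybar = R ∧ ball z R ⊆ Ωᶜ := by
  have hρ : 0 < ρ := by linarith
  have hy := mem_closedBall_self (x := ybar) hρ.le
  -- `g = ∇(ψ · 0)(ybar)`, an inner normal of `∂Ω` at `ybar`
  set g := ContinuousLinearMap.adjoint (fderivWithin ℝ ψ (closedBall ybar ρ) ybar)
    (EuclideanSpace.single 0 1)
  have hKg : 1 ≤ K * ‖g‖ := by
    have h := norm_le_mul_norm_adjoint_of_comp_eq_id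
      (chart_fderivWithin_comp_eq_id hρ hinv hψ hψinv) (EuclideanSpace.single 0 1)
    rw [PiLp.norm_single, norm_one] at h
    exact h.trans <| mul_le_mul_of_nonneg_right
      (hψinv.norm_fderivWithin_le (mem_image_of_mem ψ hy)) (norm_nonneg _)
  have hg : g ≠ 0 := by
    rintro hg
    rw [hg, norm_zero, mul_zero] at hKg
    linarith
  have hgK : 2 * K * R ≤ ‖g‖ := by
    have hK : 0 < K := lt_of_le_of_ne (hψ.nonneg hy) <| by
      rintro rfl
      rw [zero_mul] at hKg
      linarith
    nlinarith
  set z := ybar - (R / ‖g‖) • g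
  have hz : dist z ybar = R := by
    rw [dist_eq_norm, sub_sub_cancel_left, norm_neg, norm_smul, Real.norm_of_nonneg
      (by positivity), div_mul_cancel₀ _ (norm_ne_zero_iff.2 hg)]
  refine ⟨z, hz, fun v hv hvΩ => ?_⟩
  have hvρ : v ∈ ball ybar ρ := by
    have := dist_triangle v z ybar
    rw [mem_ball] at hv ⊢
    linarith
  have hpos : 0 < ψ v 0 := hup (mem_image_of_mem ψ ⟨hvρ, hvΩ⟩) 0 (Fin.val_zero n)
  have hzero : ψ ybar 0 = 0 :=
    hbd (mem_image_of_mem ψ ⟨mem_ball_self hρ, hyb⟩) 0 (Fin.val_zero n)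
  have htaylor := hψ.apply_le_inner_add (convex_closedBall ybar ρ)
    (uniqueDiffOn_closedBall_of_pos hρ) hy (ball_subset_closedBall hvρ) 0
  linarith [inner_add_mul_norm_sq_neg_of_mem_ball hR hg hgK hv]

end BoundaryChart

section Coplump

theorem ball_subset_compl_of_diam_add_le {X : Type*} [PseudoMetricSpace X] {Ω : Set X}
    {x w z : X} {R : ℝ} (hΩ : Bornology.IsBounded Ω) (hw : w ∈ Ω) (hwx : dist w x < R)
    (hz : diam Ω + 2 * R ≤ dist z x) : ball z R ⊆ Ωᶜ := fun v hv hvΩ => by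
  have := dist_le_diam_of_mem hΩ hvΩ hw
  linarith [mem_ball'.1 hv, dist_triangle4 z v w x]

variable {E : Type*} [NormedAddCommGroup E] [NormedSpace ℝ E]

theorem exists_mem_frontier_dist_le [FiniteDimensional ℝ E] {Ω : Set E} {x w : E}
    (hx : x ∉ Ω) (hw : w ∈ Ω) : ∃ y ∈ frontier Ω, dist y x ≤ dist w x := by
  obtain ⟨y, hy, hxy⟩ := exists_mem_frontier_infDist_compl_eq_dist (s := Ωᶜ) hx
    fun h => (h ▸ mem_univ w : w ∈ Ωᶜ) hw
  rw [frontier_compl, compl_compl] at *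
  refine ⟨y, hy, ?_⟩
  rw [dist_comm y, ← hxy, dist_comm w]
  exact infDist_le_dist_of_mem hw

theorem IsOpen.diam_pos [Nontrivial E] {Ω : Set E} (hΩ : IsOpen Ω) (hne : Ω.Nonempty)
    (hb : Bornology.IsBounded Ω) : 0 < diam Ω :=
  have ⟨x, hx⟩ := hne
  Metric.diam_pos (infinite_of_mem_nhds x (hΩ.mem_nhds hx)).nontrivial hb

theorem chart_radius_bounds {K ρ d r : ℝ} (hK : 1 ≤ K) (hρ : 0 < ρ) (hρK : ρ ≤ 2 * K)
    (hr : 0 < r) (hrd : r < 2 * d) :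
    2 * (r / (8 * K ^ 4 * d / ρ)) ≤ ρ ∧ 2 * K ^ 2 * (r / (8 * K ^ 4 * d / ρ)) ≤ 1 := by
  have hK4 : 1 ≤ K ^ 4 := one_le_pow₀ hK
  have hd : 0 < d := by linarith
  have hrρ : r * ρ ≤ 2 * d * (2 * K) := mul_le_mul hrd.le hρK hρ.le (by positivity)
  rw [div_div_eq_mul_div, mul_div_assoc', mul_div_assoc']
  constructor
  · rw [div_le_iff₀ (by positivity)]
    nlinarith [mul_le_mul_of_nonneg_right hK4 hd.le]
  · rw [div_le_one (by positivity)]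
    calc 2 * K ^ 2 * (r * ρ) ≤ 2 * K ^ 2 * (2 * d * (2 * K)) := by gcongr
      _ = 8 * K ^ 3 * d := by ring
      _ ≤ 8 * K ^ 4 * d := by gcongr; norm_num

end Coplump

theorem statement8_general {n : ℕ} (hn : 2 ≤ n) (α Kc ρ : ℝ)
    (Ω : Set (En n)) (hΩ : IsC2Domain Ω α Kc ρ) :
    IsCoplump Ω (8 * Kc ^ 4 * Metric.diam Ω / ρ) := by
  have : NeZero n := ⟨by omega⟩
  obtain ⟨⟨hopen, hconn, hbdd⟩, hρ, hρd, hchart⟩ := hΩ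
  -- `hρd` does not exclude `diam Ω = 0` on its own, as `ρ / 0 = 0`
  have hd : 0 < diam Ω := hopen.diam_pos hconn.nonempty hbdd
  obtain ⟨y₀, hy₀⟩ : (frontier Ω).Nonempty := nonempty_frontier_iff.2
    ⟨hconn.nonempty, fun h => NormedSpace.unbounded_univ ℝ (En n) (h ▸ hbdd)⟩
  obtain ⟨ψ₀, ψinv₀, hinv₀, -, -, -, hψ₀, hψinv₀⟩ := hchart y₀ hy₀
  have hK := one_le_of_chart hρ hinv₀ hψ₀ hψinv₀
  set c := 8 * Kc ^ 4 * diam Ω / ρ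
  have hc : 32 ≤ c := by
    rw [le_div_iff₀ hρ]
    rw [div_lt_iff₀ hd] at hρd
    nlinarith [one_le_pow₀ (n := 4) hK]
  refine ⟨by linarith, fun x hx r hr _ => ?_⟩
  by_cases hB : ∃ w ∈ Ω, dist w x < r / c
  swap
  · push Not at hB
    exact ⟨x, mem_closedBall_self hr.le, fun v hv hvΩ => (hB v hvΩ).not_gt (mem_ball.1 hv)⟩
  obtain ⟨w, hw, hwx⟩ := hB
  have hRr : r / c ≤ r / 32 := div_le_div_of_nonneg_left hr.le (by norm_num) hc
  rcases le_or_gt (2 * diam Ω) r with hlarge | hsmall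
  · obtain ⟨u, hu⟩ := exists_norm_eq (En n) hr.le
    refine ⟨x + u, by rw [mem_closedBall_iff_norm, add_sub_cancel_left, hu],
      ball_subset_compl_of_diam_add_le hbdd hw hwx ?_⟩
    rw [dist_eq_norm, add_sub_cancel_left, hu]
    linarith
  · obtain ⟨ybar, hyb, hybx⟩ := exists_mem_frontier_dist_le hx hw
    obtain ⟨ψ, ψinv, hinv, -, hup, hbd, hψ, hψinv⟩ := hchart ybar hyb
    obtain ⟨hRρ, hRK⟩ :=
      chart_radius_bounds hK hρ (le_two_mul_of_chart hρ.le hinv₀ hψinv₀) hr hsmall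
    obtain ⟨z, hz, hzΩ⟩ := exists_ball_subset_compl_of_chart (R := r / c) hyb hinv hup hbd
      hψ hψinv (div_pos hr (by linarith)) hRρ hRK
    exact ⟨z, mem_closedBall.2 (by linarith [dist_triangle z ybar x]), hzΩ⟩

/-- Theorem 2.5, coplumpness. A bounded `C^{2,α}` domain `Ω ⊂ ℝⁿ`,
`n ≥ 2`, with uniform diffeomorphism constant `K` and localization radius `ρ` is
`c`-coplump with `c = 8 K⁴ diam(Ω)/ρ`. -/
theorem statement8 {n : ℕ} (hn : 2 ≤ n) (α Kc ρ : ℝ) (hα : 0 < α ∧ α < 1)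
    (Ω : Set (En n)) (hΩ : IsC2Domain Ω α Kc ρ) :
    IsCoplump Ω (8 * Kc ^ 4 * Metric.diam Ω / ρ) :=
  statement8_general hn α Kc ρ Ω hΩ
end
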